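/- As formal power series, (q;q)_∞³ = Σ_{n≥1, gcd(n,4)=1 or n odd} χ(n) · n · q^{(n²-1)/8}, equivalently Π_{m≥1}(1-q^m)³ = Σ_{n≥1} χ(n) n q^{(n²-1)/8}, where χ(n) = (-4/n) is the Kronecker symbol (χ(n)=1 if n≡1 mod 4, χ(n)=-1 if n≡3 mod 4, χ(n)=0 if n even). -/

import Mathlib

/-!
In every commutative ring the finite identity
`(∏_{j=1}^{n} (1 - x^j))³ = ∑_{k=0}^{n} (-1)^k (2k+1) A n k`, with
`A n k = x^(k(k+1)/2) ∏_{j=n+1-k}^{n} (1 - x^j) ∏_{j=n+k+2}^{2n+1} (1 - x^j)`,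
holds by induction on `n`. Writing `q = x^(n+1)`, the terms satisfy the three-term recurrence
`A (n+1) k = (1 - q) ((1 + q²) A n k + q (A n (k-1) + A n (k+1)))` (with `A n (-1)` read as
`A n 0`), and the weights `w k = (-1)^k (2k+1)` satisfy `w (k-1) + w (k+1) = -2 w k`, so summation
by parts multiplies the weighted sum by `(1 - q) (1 - 2q + q²) = (1 - q)³`.
Since `A n k ≡ x^(k(k+1)/2)` modulo `x^(n+1)`, comparing coefficients gives Jacobi's identity.
-/

open scoped Classical

/-- The Kronecker symbol `(-4/n)`. -/
def chi (n : ℕ) : ℤ :=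
  if n % 4 = 1 then 1 else if n % 4 = 3 then -1 else 0

open Finset PowerSeries

namespace Nat

theorem add_two_choose_two (k : ℕ) : (k + 2).choose 2 = (k + 1).choose 2 + (k + 1) := by
  rw [choose_succ_succ', choose_one_right, add_comm]

theorem le_add_one_choose_two (k : ℕ) : k ≤ (k + 1).choose 2 := by
  induction k with
  | zero => simp
  | succ k ih => rw [add_two_choose_two]; omega

theorem add_one_choose_two_injective : Function.Injective fun k : ℕ => (k + 1).choose 2 :=
  (strictMono_nat_of_lt_succ fun k => by simp only [add_two_choose_two]; omega).injective

theorem odd_sq_sub_one_div_eight (j : ℕ) : ((2 * j + 1) ^ 2 - 1) / 8 = (j + 1).choose 2 := by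
  rw [choose_two_right, Nat.add_sub_cancel,
    show (2 * j + 1) ^ 2 - 1 = 4 * ((j + 1) * j) by rw [Nat.sub_eq_of_eq_add]; ring]
  exact Nat.mul_div_mul_left _ 2 (by norm_num)

end Nat

theorem chi_two_mul_add_one (j : ℕ) : chi (2 * j + 1) = (-1) ^ j := by
  rcases Nat.even_or_odd j with ⟨i, rfl⟩ | ⟨i, rfl⟩
  · rw [chi, if_pos (by omega), ← two_mul, pow_mul]
    norm_num
  · rw [chi, if_neg (by omega), if_pos (by omega), pow_succ, pow_mul]
    norm_num

section

variable {R : Type*} [CommRing R] (x : R)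

def prodOneSubPow (a b : ℕ) : R := ∏ j ∈ Icc a b, (1 - x ^ j)

variable {x} in
theorem prodOneSubPow_succ_right {a b : ℕ} (h : a ≤ b + 1) :
    prodOneSubPow x a (b + 1) = prodOneSubPow x a b * (1 - x ^ (b + 1)) :=
  prod_Icc_succ_top h _

variable {x} in
theorem prodOneSubPow_eq_one_sub_pow_mul {a b : ℕ} (h : a ≤ b) :
    prodOneSubPow x a b = (1 - x ^ a) * prodOneSubPow x (a + 1) b := by
  rw [prodOneSubPow, ← insert_Icc_add_one_left_eq_Icc h, prod_insert (by simp)]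
  rfl

theorem prodOneSubPow_succ_self (b : ℕ) : prodOneSubPow x (b + 1) b = 1 := by
  simp [prodOneSubPow]

theorem prodOneSubPow_zero_left (b : ℕ) : prodOneSubPow x 0 b = 0 :=
  prod_eq_zero (i := 0) (by simp) (by simp)

theorem pow_dvd_prodOneSubPow_sub_one (a b : ℕ) : x ^ a ∣ prodOneSubPow x a b - 1 := by
  rw [← Ideal.mem_span_singleton, ← Ideal.Quotient.eq, map_one, prodOneSubPow, map_prod]
  refine prod_eq_one fun j hj => ?_
  rw [map_sub, map_one, sub_eq_self, Ideal.Quotient.eq_zero_iff_mem, Ideal.mem_span_singleton]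
  exact pow_dvd_pow x (mem_Icc.mp hj).1

/-- For `n < k` the truncated `n + 1 - k` is `0`, and the factor `1 - x ^ 0` kills the term. -/
def jacobiTerm (n k : ℕ) : R :=
  x ^ (k + 1).choose 2 * prodOneSubPow x (n + 1 - k) n * prodOneSubPow x (n + k + 2) (2 * n + 1)

variable {x} in
theorem jacobiTerm_eq {n k a c b : ℕ} (ha : n + 1 - k = a) (hc : n + k + 2 = c)
    (hb : 2 * n + 1 = b) :
    jacobiTerm x n k = x ^ (k + 1).choose 2 * prodOneSubPow x a n * prodOneSubPow x c b := by
  rw [jacobiTerm, ha, hc, hb]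

theorem jacobiTerm_of_lt {n k : ℕ} (h : n < k) : jacobiTerm x n k = 0 := by
  rw [jacobiTerm_eq (Nat.sub_eq_zero_of_le h) rfl rfl, prodOneSubPow_zero_left, mul_zero,
    zero_mul]

theorem pow_dvd_jacobiTerm_sub (n k : ℕ) :
    x ^ (n + 1) ∣ jacobiTerm x n k - x ^ (k + 1).choose 2 := by
  set L := prodOneSubPow x (n + 1 - k) n
  set U := prodOneSubPow x (n + k + 2) (2 * n + 1)
  have hLU : x ^ (n + 1 - k) ∣ L * U - 1 := by
    rw [show L * U - 1 = (L - 1) * U + (U - 1) by ring]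
    exact dvd_add (dvd_mul_of_dvd_left (pow_dvd_prodOneSubPow_sub_one x _ _) U)
      ((pow_dvd_pow x (by omega)).trans (pow_dvd_prodOneSubPow_sub_one x _ _))
  have hk := Nat.le_add_one_choose_two k
  rw [jacobiTerm, show x ^ (k + 1).choose 2 * L * U - x ^ (k + 1).choose 2 =
    x ^ (k + 1).choose 2 * (L * U - 1) by ring]
  exact (pow_dvd_pow x (by omega)).trans (pow_add x _ (n + 1 - k) ▸ mul_dvd_mul_left _ hLU)

theorem jacobiTerm_succ_zero (n : ℕ) :
    jacobiTerm x (n + 1) 0 = (1 - x ^ (n + 1)) *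
      ((1 + x ^ (n + 1) + x ^ (2 * n + 2)) * jacobiTerm x n 0 +
        x ^ (n + 1) * jacobiTerm x n 1) := by
  have hT₀ : (0 + 1).choose 2 = 0 := rfl
  have hT₁ : (1 + 1).choose 2 = 1 := rfl
  rcases Nat.eq_zero_or_pos n with rfl | hn
  · rw [jacobiTerm_of_lt x zero_lt_one, jacobiTerm_eq (a := 2) (c := 3) (b := 3) rfl rfl rfl,
      jacobiTerm_eq (a := 1) (c := 2) (b := 1) rfl rfl rfl,
      prodOneSubPow_eq_one_sub_pow_mul le_rfl, prodOneSubPow_succ_self, prodOneSubPow_succ_self,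
      prodOneSubPow_succ_self, hT₀]
    ring
  have h₀ : jacobiTerm x n 0 = (1 - x ^ (n + 2)) * prodOneSubPow x (n + 3) (2 * n + 1) := by
    rw [jacobiTerm_eq (a := n + 1) rfl rfl rfl, prodOneSubPow_succ_self,
      prodOneSubPow_eq_one_sub_pow_mul (a := n + 2) (by omega), hT₀, pow_zero, one_mul, one_mul]
  have h₁ : jacobiTerm x n 1 = x * (1 - x ^ n) * prodOneSubPow x (n + 3) (2 * n + 1) := by
    rw [jacobiTerm_eq (a := n) (c := n + 3) (by omega) rfl rfl,
      prodOneSubPow_eq_one_sub_pow_mul le_rfl, prodOneSubPow_succ_self, hT₁, pow_one, mul_one]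
  have h₂ : jacobiTerm x (n + 1) 0 = prodOneSubPow x (n + 3) (2 * n + 1) *
      (1 - x ^ (2 * n + 2)) * (1 - x ^ (2 * n + 3)) := by
    rw [jacobiTerm_eq (a := n + 2) (c := n + 3) (b := 2 * n + 3) rfl (by omega) (by omega),
      prodOneSubPow_succ_self, prodOneSubPow_succ_right (b := 2 * n + 2) (by omega),
      prodOneSubPow_succ_right (b := 2 * n + 1) (by omega), hT₀, pow_zero, one_mul, one_mul]
  rw [h₀, h₁, h₂]
  ring

theorem jacobiTerm_succ_succ_of_lt {n k : ℕ} (h : k + 1 < n) :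
    jacobiTerm x (n + 1) (k + 1) = (1 - x ^ (n + 1)) * ((1 + x ^ (2 * n + 2)) *
      jacobiTerm x n (k + 1) + x ^ (n + 1) * (jacobiTerm x n k + jacobiTerm x n (k + 2))) := by
  obtain ⟨d, hd⟩ : ∃ d, n = k + d + 2 := ⟨n - k - 2, by omega⟩
  set L := prodOneSubPow x (d + 3) n
  set U := prodOneSubPow x (n + k + 4) (2 * n + 1)
  have h₀ : jacobiTerm x n k =
      x ^ (k + 1).choose 2 * L * ((1 - x ^ (n + k + 2)) * ((1 - x ^ (n + k + 3)) * U)) := by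
    rw [jacobiTerm_eq (a := d + 3) (by omega) rfl rfl,
      prodOneSubPow_eq_one_sub_pow_mul (a := n + k + 2) (by omega),
      prodOneSubPow_eq_one_sub_pow_mul (a := n + k + 3) (by omega)]
  have h₁ : jacobiTerm x n (k + 1) =
      x ^ (k + 2).choose 2 * ((1 - x ^ (d + 2)) * L) * ((1 - x ^ (n + k + 3)) * U) := by
    rw [jacobiTerm_eq (a := d + 2) (c := n + k + 3) (by omega) (by omega) rfl,
      prodOneSubPow_eq_one_sub_pow_mul (a := d + 2) (by omega),
      prodOneSubPow_eq_one_sub_pow_mul (a := n + k + 3) (by omega)]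
  have h₂ : jacobiTerm x n (k + 2) =
      x ^ (k + 3).choose 2 * ((1 - x ^ (d + 1)) * ((1 - x ^ (d + 2)) * L)) * U := by
    rw [jacobiTerm_eq (a := d + 1) (c := n + k + 4) (by omega) (by omega) rfl,
      prodOneSubPow_eq_one_sub_pow_mul (a := d + 1) (by omega),
      prodOneSubPow_eq_one_sub_pow_mul (a := d + 2) (by omega)]
  have h₃ : jacobiTerm x (n + 1) (k + 1) = x ^ (k + 2).choose 2 * (L * (1 - x ^ (n + 1))) *
      (U * (1 - x ^ (2 * n + 2)) * (1 - x ^ (2 * n + 3))) := by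
    rw [jacobiTerm_eq (a := d + 3) (c := n + k + 4) (b := 2 * n + 3) (by omega) (by omega)
        (by omega),
      prodOneSubPow_succ_right (b := n) (by omega),
      prodOneSubPow_succ_right (b := 2 * n + 2) (by omega),
      prodOneSubPow_succ_right (b := 2 * n + 1) (by omega)]
  rw [h₀, h₁, h₂, h₃, Nat.add_two_choose_two (k + 1), Nat.add_two_choose_two, hd]
  ring

theorem jacobiTerm_succ_succ (n k : ℕ) :
    jacobiTerm x (n + 1) (k + 1) = (1 - x ^ (n + 1)) * ((1 + x ^ (2 * n + 2)) *
      jacobiTerm x n (k + 1) + x ^ (n + 1) * (jacobiTerm x n k + jacobiTerm x n (k + 2))) := by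
  rcases lt_trichotomy (k + 1) n with h | rfl | h
  · exact jacobiTerm_succ_succ_of_lt x h
  · rw [jacobiTerm_of_lt x (by omega : k + 1 < k + 2)]
    set L := prodOneSubPow x 2 (k + 1)
    have h₀ : jacobiTerm x (k + 1) k = x ^ (k + 1).choose 2 * L * (1 - x ^ (2 * k + 3)) := by
      rw [jacobiTerm_eq (a := 2) (c := 2 * k + 3) (b := 2 * k + 3) (by omega) (by omega)
          (by omega),
        prodOneSubPow_eq_one_sub_pow_mul le_rfl, prodOneSubPow_succ_self, mul_one]
    have h₁ : jacobiTerm x (k + 1) (k + 1) = x ^ (k + 2).choose 2 * ((1 - x ^ 1) * L) := by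
      rw [jacobiTerm_eq (a := 1) (c := 2 * k + 4) (b := 2 * k + 3) (by omega) (by omega)
          (by omega),
        prodOneSubPow_eq_one_sub_pow_mul (by omega), prodOneSubPow_succ_self, mul_one]
    have h₂ : jacobiTerm x (k + 2) (k + 1) =
        x ^ (k + 2).choose 2 * (L * (1 - x ^ (k + 2))) * (1 - x ^ (2 * k + 5)) := by
      rw [jacobiTerm_eq (a := 2) (c := 2 * k + 5) (b := 2 * k + 5) (by omega) (by omega)
          (by omega),
        prodOneSubPow_succ_right (b := k + 1) (by omega), prodOneSubPow_eq_one_sub_pow_mul le_rfl,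
        prodOneSubPow_succ_self, mul_one]
    rw [h₀, h₁, h₂, Nat.add_two_choose_two]
    ring
  · rw [jacobiTerm_of_lt x (by omega : n < k + 1), jacobiTerm_of_lt x (by omega : n < k + 2)]
    obtain h | rfl := Nat.lt_or_eq_of_le (Nat.le_of_lt_succ h)
    · rw [jacobiTerm_of_lt x h, jacobiTerm_of_lt x (by omega : n + 1 < k + 1)]
      ring
    · rw [jacobiTerm_eq (a := 1) (c := 2 * n + 2) (b := 2 * n + 1) (by omega) (by omega) rfl,
        jacobiTerm_eq (a := 1) (c := 2 * n + 4) (b := 2 * n + 3) (by omega) (by omega)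
          (by omega),
        prodOneSubPow_succ_right (b := n) (by omega), prodOneSubPow_succ_self,
        prodOneSubPow_succ_self, Nat.add_two_choose_two]
      ring

def jacobiCert (n : ℕ) : ℕ → R
  | 0 => 0
  | k + 1 => (-1) ^ k * x ^ (n + 1) * (1 - x ^ (n + 1)) *
      ((2 * k + 3) * jacobiTerm x n k + (2 * k + 1) * jacobiTerm x n (k + 1))

theorem jacobiTerm_succ_telescope (n k : ℕ) :
    ((-1) ^ k * (2 * k + 1) : ℤ) • jacobiTerm x (n + 1) k =
      (1 - x ^ (n + 1)) ^ 3 * (((-1) ^ k * (2 * k + 1) : ℤ) • jacobiTerm x n k) +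
        (jacobiCert x n (k + 1) - jacobiCert x n k) := by
  rcases k with _ | k <;> simp only [zsmul_eq_mul, jacobiCert] <;> push_cast
  · linear_combination jacobiTerm_succ_zero x n
  · linear_combination (-1) ^ (k + 1) * (2 * (k : R) + 3) * jacobiTerm_succ_succ x n k

def finiteJacobiSum (n : ℕ) : R :=
  ∑ k ∈ range (n + 1), ((-1) ^ k * (2 * k + 1) : ℤ) • jacobiTerm x n k

theorem finiteJacobiSum_succ (n : ℕ) :
    finiteJacobiSum x (n + 1) = (1 - x ^ (n + 1)) ^ 3 * finiteJacobiSum x n := by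
  have hcert : jacobiCert x n (n + 2) = 0 := by
    simp [jacobiCert, jacobiTerm_of_lt x (lt_add_one n), jacobiTerm_of_lt x (by omega : n < n + 2)]
  rw [finiteJacobiSum, sum_congr rfl fun k _ => jacobiTerm_succ_telescope x n k, sum_add_distrib,
    ← mul_sum, sum_range_sub, sum_range_succ, jacobiTerm_of_lt x (lt_add_one n), smul_zero,
    add_zero, hcert, jacobiCert, sub_zero, add_zero, finiteJacobiSum]

theorem prodOneSubPow_one_pow_three (n : ℕ) : prodOneSubPow x 1 n ^ 3 = finiteJacobiSum x n := by
  induction n with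
  | zero => simp [finiteJacobiSum, jacobiTerm, prodOneSubPow_succ_self]
  | succ n ih =>
    rw [prodOneSubPow_succ_right (by omega), mul_pow, ih, finiteJacobiSum_succ, mul_comm]

end

theorem coeff_jacobiTerm {R : Type*} [CommRing R] {m n : ℕ} (k : ℕ) (h : m ≤ n) :
    coeff m (jacobiTerm (X : R⟦X⟧) n k) = if m = (k + 1).choose 2 then 1 else 0 := by
  have := X_pow_dvd_iff.mp (pow_dvd_jacobiTerm_sub (X : R⟦X⟧) n k) m (by omega)
  rwa [map_sub, coeff_X_pow, sub_eq_zero] at this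

open PowerSeries in
theorem jacobi_identity_reindexed (m : ℕ) :
    PowerSeries.coeff (R := ℤ) m ((∏ n ∈ Finset.Icc 1 (m + 1), (1 - (X : PowerSeries ℤ) ^ n)) ^ 3) =
      if h : ∃ n : ℕ, 1 ≤ n ∧ n % 2 = 1 ∧ m = (n ^ 2 - 1) / 8 then
        chi h.choose * h.choose
      else 0 := by
  change coeff m (prodOneSubPow X 1 (m + 1) ^ 3) = _
  rw [prodOneSubPow_one_pow_three, finiteJacobiSum, map_sum]
  simp only [map_zsmul, coeff_jacobiTerm _ (Nat.le_succ m), smul_eq_mul, mul_ite, mul_one,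
    mul_zero]
  split_ifs with h
  · obtain ⟨-, hodd, hm⟩ := h.choose_spec
    obtain ⟨j, hj⟩ : ∃ j, h.choose = 2 * j + 1 := ⟨h.choose / 2, by omega⟩
    rw [hj, Nat.odd_sq_sub_one_div_eight] at hm
    have hjm : j ∈ range (m + 2) := mem_range.mpr (by have := Nat.le_add_one_choose_two j; omega)
    rw [sum_eq_single_of_mem j hjm fun k _ hk =>
        if_neg fun hkm => hk (Nat.add_one_choose_two_injective (hkm.symm.trans hm)),
      if_pos hm, hj, chi_two_mul_add_one]
    push_cast
    ring
  · exact sum_eq_zero fun k _ => if_neg fun hm =>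
      h ⟨2 * k + 1, by omega, by omega, by rw [Nat.odd_sq_sub_one_div_eight, hm]⟩
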